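/- (Interior critical point of the finite-interval cost function.) Let b > 0, α ∈ ℝ, ℓ > 0, and let f ∈ C²([0,ℓ];ℝ) be strictly positive on [0,ℓ], satisfy −f''(t) + (t+α)²f(t) = (1/b)(1 − f(t)²)f(t) on [0,ℓ], the Neumann conditions f'(0) = f'(ℓ) = 0, and the optimality condition ∫₀^ℓ (t+α)f(t)² dt = 0. Let K(t) := f(t)² + 2∫₀^t (η+α)f(η)² dη. Then: (i) −ℓ < α < 0; (ii) there exists t_m ∈ (0,ℓ) with K'(t_m) = 0; and (iii) at every t_c ∈ (0,ℓ) with K'(t_c) = 0 one has K(t_c) = (1 − 1/b + f(t_c)²/(2b))·f(t_c)² − ((ℓ+α)² − 1/b + f(ℓ)²/(2b))·f(ℓ)². -/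

import Mathlib

open MeasureTheory Real Set Filter
open scoped Topology

noncomputable section

/-- The cost function `K(t) = f(t)² + 2∫₀ᵗ (η+α) f(η)² dη`. -/
def costK (α : ℝ) (f : ℝ → ℝ) (t : ℝ) : ℝ :=
  (f t) ^ 2 + 2 * ∫ η in Ioo (0 : ℝ) t, (η + α) * (f η) ^ 2

/-!
Along a solution the Ginzburg–Landau energy `E = f'² − (t+α)² f² + (f² − f⁴/2)/b` satisfies
`E' = −2(t+α) f²`, so `E + F` is constant, `F` being the potential. At a critical point of
`K = f² + F`, the formula `K' = 2f (f' + (t+α) f)` and `f > 0` give `f' = −(t+α) f`, which cancels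
the first two terms of `E`; as `F(ℓ) = 0` by optimality and `f'(ℓ) = 0`, the value
`K(t_c) = f² + E(ℓ) − E(t_c)` is the claimed one. The same formula is `2α f(0)² < 0` at `0` and
`2(ℓ+α) f(ℓ)² > 0` at `ℓ`, so the intermediate value theorem yields a critical point. Finally
`α < 0 < ℓ + α`, since otherwise `(t+α) f²` would have a constant sign on `(0, ℓ)`.
-/

def glPotential (α : ℝ) (f : ℝ → ℝ) (t : ℝ) : ℝ :=
  2 * ∫ η in (0 : ℝ)..t, (η + α) * f η ^ 2

def glEnergy (b α : ℝ) (f : ℝ → ℝ) (t : ℝ) : ℝ :=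
  deriv f t ^ 2 - (t + α) ^ 2 * f t ^ 2 + (f t ^ 2 - f t ^ 4 / 2) / b

theorem neg_lt_and_lt_zero_of_setIntegral_mul_eq_zero {w : ℝ → ℝ} {α ℓ : ℝ} (hℓ : 0 < ℓ)
    (hw : ContinuousOn w (Icc 0 ℓ)) (hpos : ∀ t ∈ Ioo 0 ℓ, 0 < w t)
    (h : ∫ t in Ioo (0 : ℝ) ℓ, (t + α) * w t = 0) : -ℓ < α ∧ α < 0 := by
  have hint : IntervalIntegrable (fun t => (t + α) * w t) volume 0 ℓ :=
    ((continuousOn_id.add continuousOn_const).mul hw).intervalIntegrable_of_Icc hℓ.le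
  rw [← integral_Ioc_eq_integral_Ioo, ← intervalIntegral.integral_of_le hℓ.le] at h
  constructor
  · by_contra! hα
    have : 0 < ∫ t in (0 : ℝ)..ℓ, -((t + α) * w t) :=
      intervalIntegral.intervalIntegral_pos_of_pos_on hint.neg
        (fun t ht => neg_pos.2 (mul_neg_of_neg_of_pos (by linarith [ht.2]) (hpos t ht))) hℓ
    rw [intervalIntegral.integral_neg, h, neg_zero] at this
    exact lt_irrefl 0 this
  · by_contra! hα
    have : 0 < ∫ t in (0 : ℝ)..ℓ, (t + α) * w t :=
      intervalIntegral.intervalIntegral_pos_of_pos_on hint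
        (fun t ht => mul_pos (by linarith [ht.1]) (hpos t ht)) hℓ
    exact this.ne' h

theorem glPotential_eq_setIntegral_Ioo {α t : ℝ} (f : ℝ → ℝ) (ht : 0 ≤ t) :
    glPotential α f t = 2 * ∫ η in Ioo (0 : ℝ) t, (η + α) * f η ^ 2 := by
  rw [glPotential, intervalIntegral.integral_of_le ht, integral_Ioc_eq_integral_Ioo]

theorem costK_eq_sq_add_glPotential {α t : ℝ} (f : ℝ → ℝ) (ht : 0 ≤ t) :
    costK α f t = f t ^ 2 + glPotential α f t := by
  rw [costK, glPotential_eq_setIntegral_Ioo f ht]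

theorem hasDerivAt_glPotential {α : ℝ} {f : ℝ → ℝ} (hf : Continuous f) (t : ℝ) :
    HasDerivAt (glPotential α f) (2 * ((t + α) * f t ^ 2)) t := by
  have hg : Continuous fun η => (η + α) * f η ^ 2 := by fun_prop
  exact (intervalIntegral.integral_hasDerivAt_right (hg.intervalIntegrable 0 t)
    (hg.stronglyMeasurableAtFilter _ _) hg.continuousAt).const_mul 2

theorem hasDerivAt_costK {α t : ℝ} {f : ℝ → ℝ} (hf : Differentiable ℝ f) (ht : 0 < t) :
    HasDerivAt (costK α f) (2 * f t * (deriv f t + (t + α) * f t)) t := by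
  have hK : (fun s => f s ^ 2 + glPotential α f s) =ᶠ[𝓝 t] costK α f := by
    filter_upwards [Ioi_mem_nhds ht] with s hs
    exact (costK_eq_sq_add_glPotential f hs.le).symm
  refine (((hf t).hasDerivAt.pow 2).add (hasDerivAt_glPotential hf.continuous t))
    |>.congr_of_eventuallyEq hK.symm |>.congr_deriv ?_
  push_cast
  ring

theorem hasDerivAt_glEnergy {b α t : ℝ} {f : ℝ → ℝ} (hf : DifferentiableAt ℝ f t)
    (hf' : DifferentiableAt ℝ (deriv f) t) :
    HasDerivAt (glEnergy b α f)
      (2 * deriv f t * (deriv (deriv f) t - (t + α) ^ 2 * f t + 1 / b * (1 - f t ^ 2) * f t)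
        - 2 * ((t + α) * f t ^ 2)) t := by
  have hlin : HasDerivAt (fun s : ℝ => s + α) 1 t := (hasDerivAt_id t).add_const α
  have hsq := hf.hasDerivAt.fun_pow 2
  refine ((hf'.hasDerivAt.fun_pow 2).sub ((hlin.fun_pow 2).fun_mul hsq)).add
    ((hsq.sub ((hf.hasDerivAt.fun_pow 4).div_const 2)).div_const b) |>.congr_deriv ?_
  push_cast
  ring

theorem glEnergy_add_glPotential_eq {b α a c : ℝ} {f : ℝ → ℝ} (hf : ContDiff ℝ 2 f)
    (hode : ∀ t ∈ Icc a c,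
      -deriv (deriv f) t + (t + α) ^ 2 * f t = 1 / b * (1 - (f t) ^ 2) * f t) :
    ∀ t ∈ Icc a c,
      glEnergy b α f t + glPotential α f t = glEnergy b α f a + glPotential α f a := by
  have hdf : Differentiable ℝ f := hf.differentiable (by norm_num)
  have hdf' : Differentiable ℝ (deriv f) :=
    (hf.iterate_deriv' 1 1).differentiable (by norm_num)
  have hderiv :
      ∀ t ∈ Icc a c, HasDerivAt (fun s => glEnergy b α f s + glPotential α f s) 0 t := by
    intro t ht
    refine ((hasDerivAt_glEnergy (hdf t) (hdf' t)).add
      (hasDerivAt_glPotential hdf.continuous t)).congr_deriv ?_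
    rw [show deriv (deriv f) t - (t + α) ^ 2 * f t + 1 / b * (1 - f t ^ 2) * f t = 0 by
      linarith [hode t ht]]
    ring
  exact constant_of_has_deriv_right_zero
    (fun t ht => (hderiv t ht).continuousAt.continuousWithinAt)
    (fun t ht => (hderiv t (Ico_subset_Icc_self ht)).hasDerivWithinAt)

theorem deriv_costK_eq_zero_iff {α t : ℝ} {f : ℝ → ℝ} (hf : Differentiable ℝ f) (ht : 0 < t)
    (hft : f t ≠ 0) : deriv (costK α f) t = 0 ↔ deriv f t = -((t + α) * f t) := by
  rw [(hasDerivAt_costK hf ht).deriv, mul_eq_zero, or_iff_right (mul_ne_zero two_ne_zero hft),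
    add_eq_zero_iff_eq_neg]

theorem exists_mem_Ioo_deriv_costK_eq_zero {α ℓ : ℝ} {f : ℝ → ℝ} (hf : ContDiff ℝ 1 f)
    (hαℓ : -ℓ < α) (hα : α < 0) (hf0 : f 0 ≠ 0) (hfℓ : f ℓ ≠ 0)
    (hN0 : deriv f 0 = 0) (hNℓ : deriv f ℓ = 0) :
    ∃ t ∈ Ioo (0 : ℝ) ℓ, deriv (costK α f) t = 0 := by
  have hdf : Differentiable ℝ f := hf.differentiable one_ne_zero
  have hcont : Continuous fun t => 2 * f t * (deriv f t + (t + α) * f t) := by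
    have := hf.continuous_deriv le_rfl
    have := hdf.continuous
    fun_prop
  have hsign : (0 : ℝ) ∈ Ioo (2 * f 0 * (deriv f 0 + (0 + α) * f 0))
      (2 * f ℓ * (deriv f ℓ + (ℓ + α) * f ℓ)) := by
    rw [hN0, hNℓ]
    constructor
    · nlinarith [mul_pos (neg_pos.2 hα) (pow_pos (abs_pos.2 hf0) 2), sq_abs (f 0)]
    · nlinarith [mul_pos (neg_lt_iff_pos_add.1 hαℓ) (pow_pos (abs_pos.2 hfℓ) 2), sq_abs (f ℓ)]
  obtain ⟨t, ht, hzero⟩ :=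
    intermediate_value_Ioo (by linarith) hcont.continuousOn hsign
  exact ⟨t, ht, (hasDerivAt_costK hdf ht.1).deriv.trans hzero⟩

theorem cost_function_interior_critical_point_general
    (b α ℓ : ℝ) (hℓ : 0 < ℓ)
    (f : ℝ → ℝ) (hf : ContDiff ℝ 2 f)
    (hpos : ∀ t ∈ Icc (0 : ℝ) ℓ, 0 < f t)
    (hode : ∀ t ∈ Icc (0 : ℝ) ℓ,
      -deriv (deriv f) t + (t + α) ^ 2 * f t = 1 / b * (1 - (f t) ^ 2) * f t)
    (hN0 : deriv f 0 = 0) (hNℓ : deriv f ℓ = 0)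
    (hopt : (∫ t in Ioo (0 : ℝ) ℓ, (t + α) * (f t) ^ 2) = 0) :
    (-ℓ < α ∧ α < 0) ∧
    (∃ tm ∈ Ioo (0 : ℝ) ℓ, deriv (costK α f) tm = 0) ∧
    (∀ tc ∈ Ioo (0 : ℝ) ℓ, deriv (costK α f) tc = 0 →
      costK α f tc =
        (1 - 1 / b + (f tc) ^ 2 / (2 * b)) * (f tc) ^ 2 -
          ((ℓ + α) ^ 2 - 1 / b + (f ℓ) ^ 2 / (2 * b)) * (f ℓ) ^ 2) := by
  have hdf : Differentiable ℝ f := hf.differentiable (by norm_num)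
  have hpos' : ∀ t ∈ Ioo (0 : ℝ) ℓ, 0 < f t := fun t ht => hpos t (Ioo_subset_Icc_self ht)
  obtain ⟨hαℓ, hα⟩ := neg_lt_and_lt_zero_of_setIntegral_mul_eq_zero hℓ
    (hf.continuous.pow 2).continuousOn (fun t ht => pow_pos (hpos' t ht) 2) hopt
  refine ⟨⟨hαℓ, hα⟩, exists_mem_Ioo_deriv_costK_eq_zero (hf.of_le (by norm_num)) hαℓ hα
    (hpos 0 ⟨le_rfl, hℓ.le⟩).ne' (hpos ℓ ⟨hℓ.le, le_rfl⟩).ne' hN0 hNℓ, fun tc htc hcrit => ?_⟩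
  have hdtc := (deriv_costK_eq_zero_iff hdf htc.1 (hpos' tc htc).ne').1 hcrit
  have hFℓ : glPotential α f ℓ = 0 := by
    rw [glPotential_eq_setIntegral_Ioo f hℓ.le, hopt, mul_zero]
  have hcons := glEnergy_add_glPotential_eq hf hode
  have hEF := (hcons tc (Ioo_subset_Icc_self htc)).trans (hcons ℓ ⟨hℓ.le, le_rfl⟩).symm
  simp only [glEnergy, hdtc, hNℓ, hFℓ] at hEF
  rw [costK_eq_sq_add_glPotential f htc.1.le]
  linear_combination hEF

/-- **Interior critical point of the finite-interval cost function.** -/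
theorem cost_function_interior_critical_point
    (b α ℓ : ℝ) (hb : 0 < b) (hℓ : 0 < ℓ)
    (f : ℝ → ℝ) (hf : ContDiff ℝ 2 f)
    (hpos : ∀ t ∈ Icc (0 : ℝ) ℓ, 0 < f t)
    (hode : ∀ t ∈ Icc (0 : ℝ) ℓ,
      -deriv (deriv f) t + (t + α) ^ 2 * f t = 1 / b * (1 - (f t) ^ 2) * f t)
    (hN0 : deriv f 0 = 0) (hNℓ : deriv f ℓ = 0)
    (hopt : (∫ t in Ioo (0 : ℝ) ℓ, (t + α) * (f t) ^ 2) = 0) :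
    (-ℓ < α ∧ α < 0) ∧
    (∃ tm ∈ Ioo (0 : ℝ) ℓ, deriv (costK α f) tm = 0) ∧
    (∀ tc ∈ Ioo (0 : ℝ) ℓ, deriv (costK α f) tc = 0 →
      costK α f tc =
        (1 - 1 / b + (f tc) ^ 2 / (2 * b)) * (f tc) ^ 2 -
          ((ℓ + α) ^ 2 - 1 / b + (f ℓ) ^ 2 / (2 * b)) * (f ℓ) ^ 2) :=
  cost_function_interior_critical_point_general b α ℓ hℓ f hf hpos hode hN0 hNℓ hopt
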